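/- Let S > 0, let U ⊆ (0,S] be Lebesgue measurable, set β(s) := Leb(U ∩ [0,s]), R := β(S), and α(r) := min{s ∈ [0,S] : β(s) = r}. Let E be a real Banach space and let z : [0,S] → E satisfy z(s) = z(0) + ∫₀^s v(σ) dσ for all s ∈ [0,S], where v : [0,S] → E is Bochner integrable with ‖v(σ)‖ ≤ 1 for a.e. σ ∈ [0,S] and v(σ) = 0 for a.e. σ ∈ [0,S] \ U. Then the reparametrized function z̃ := z ∘ α is 1-Lipschitz on [0,R]: for all ρ, r ∈ [0,R] with ρ ≤ r one has ‖z(α(r)) − z(α(ρ))‖ ≤ r − ρ. (Lemma 5.9.) -/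

import Mathlib

open MeasureTheory

/-- The function `β(s) := Leb(U ∩ [0,s])`. -/
noncomputable def betaFun (U : Set ℝ) (s : ℝ) : ℝ :=
  (volume (U ∩ Set.Icc 0 s)).toReal

/-- The "right inverse" `α(r) := min{s ∈ [0,S] : β(s) = r}`. -/
noncomputable def alphaFun (U : Set ℝ) (S : ℝ) (r : ℝ) : ℝ :=
  sInf {s : ℝ | s ∈ Set.Icc 0 S ∧ betaFun U s = r}

/-!
Almost everywhere on `[0,S]` the speed `‖v‖` of `z` is at most the indicator of `U`, so for
`a ≤ b` the increment `‖z b - z a‖` is at most `Leb(U ∩ (a,b]) = β b - β a`. Since `β` is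
`1`-Lipschitz, the infimum defining `α r` is attained and `β (α r) = r`; hence
`‖z (α r) - z (α ρ)‖ ≤ |β (α r) - β (α ρ)| = r - ρ`.
-/

open Set
open scoped ENNReal Interval

theorem betaFun_le_add_dist (U : Set ℝ) (x y : ℝ) : betaFun U x ≤ betaFun U y + dist x y := by
  have hsub : U ∩ Icc 0 x ⊆ (U ∩ Icc 0 y) ∪ Ι y x := by
    rintro t ⟨htU, ht0, htx⟩
    rcases le_or_gt t y with hty | hyt
    · exact Or.inl ⟨htU, ht0, hty⟩
    · exact Or.inr (Ioc_subset_uIoc ⟨hyt, htx⟩)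
  have hfin : volume ((U ∩ Icc 0 y) ∪ Ι y x) ≠ ∞ :=
    measure_union_ne_top (measure_inter_ne_top_of_right_ne_top measure_Icc_lt_top.ne)
      (by simp [Real.volume_uIoc])
  calc betaFun U x ≤ volume.real ((U ∩ Icc 0 y) ∪ Ι y x) := measureReal_mono hsub hfin
    _ ≤ betaFun U y + volume.real (Ι y x) := measureReal_union_le _ _
    _ = betaFun U y + dist x y := by simp [Measure.real, Real.volume_uIoc, Real.dist_eq]

theorem betaFun_lipschitzWith (U : Set ℝ) : LipschitzWith 1 (betaFun U) :=
  .of_le_add (betaFun_le_add_dist U)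

theorem betaFun_zero (U : Set ℝ) : betaFun U 0 = 0 := by
  rw [betaFun, Icc_self, measure_mono_null inter_subset_right Real.volume_singleton,
    ENNReal.toReal_zero]

theorem betaFun_sub_betaFun (U : Set ℝ) {a b : ℝ} (ha : 0 ≤ a) (hab : a ≤ b) :
    betaFun U b - betaFun U a = volume.real (Ioc a b ∩ U) := by
  have hsplit : volume.real (U ∩ Icc 0 b ∩ Icc 0 a) + volume.real ((U ∩ Icc 0 b) \ Icc 0 a)
      = betaFun U b :=
    measureReal_inter_add_sdiff measurableSet_Icc
      (measure_inter_ne_top_of_right_ne_top measure_Icc_lt_top.ne)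
  have hinter : U ∩ Icc 0 b ∩ Icc 0 a = U ∩ Icc 0 a := by
    rw [inter_assoc, inter_eq_right.2 (Icc_subset_Icc_right hab)]
  have hdiff : (U ∩ Icc 0 b) \ Icc 0 a = Ioc a b ∩ U := by
    ext t
    simp only [mem_inter_iff, mem_sdiff, mem_Icc, mem_Ioc]
    grind
  rw [hinter, hdiff] at hsplit
  rw [← hsplit]
  exact add_sub_cancel_left _ _

theorem alphaFun_spec {U : Set ℝ} {S r : ℝ} (hS : 0 ≤ S) (hr : r ∈ Icc 0 (betaFun U S)) :
    alphaFun U S r ∈ Icc 0 S ∧ betaFun U (alphaFun U S r) = r := by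
  have hcont := (betaFun_lipschitzWith U).continuous
  have hne : {s | s ∈ Icc 0 S ∧ betaFun U s = r}.Nonempty :=
    intermediate_value_Icc hS hcont.continuousOn (by rwa [betaFun_zero])
  have hclosed : IsClosed {s | s ∈ Icc 0 S ∧ betaFun U s = r} :=
    isClosed_Icc.inter (isClosed_singleton.preimage hcont)
  exact hclosed.csInf_mem hne ⟨0, fun _ hs => hs.1.1⟩

section

variable {E : Type*} [NormedAddCommGroup E] [NormedSpace ℝ E]

theorem norm_setIntegral_le_mul_measureReal_inter {X : Type*} [MeasurableSpace X]
    {μ : Measure X} {s U : Set X} {f : X → E} {C : ℝ}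
    (hs : MeasurableSet s) (hU : MeasurableSet U) (hsU : μ (s ∩ U) < ∞)
    (hC : ∀ᵐ x ∂μ.restrict s, ‖f x‖ ≤ C) (hf : ∀ᵐ x ∂μ.restrict (s \ U), f x = 0) :
    ‖∫ x in s, f x ∂μ‖ ≤ C * μ.real (s ∩ U) := by
  have hf' : ∀ᵐ x ∂μ, x ∈ s \ (s ∩ U) → f x = 0 := by
    rw [sdiff_self_inter]
    exact (ae_restrict_iff' (hs.diff hU)).1 hf
  rw [setIntegral_eq_of_subset_of_ae_sdiff_eq_zero hs.nullMeasurableSet inter_subset_left hf']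
  exact norm_setIntegral_le_of_norm_le_const_ae hsU
    (ae_restrict_of_ae_restrict_of_subset inter_subset_left hC)

theorem intervalIntegral_eq_sub_of_eq_add_integral {z v : ℝ → E} {S a b : ℝ}
    (hv : IntegrableOn v (Icc 0 S)) (hz : ∀ s ∈ Icc (0 : ℝ) S, z s = z 0 + ∫ σ in (0 : ℝ)..s, v σ)
    (ha : a ∈ Icc 0 S) (hb : b ∈ Icc 0 S) :
    ∫ σ in a..b, v σ = z b - z a := by
  have hvi {c d : ℝ} (hc : c ∈ Icc 0 S) (hd : d ∈ Icc 0 S) : IntervalIntegrable v volume c d :=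
    (hv.mono_set (uIcc_subset_Icc hc hd)).intervalIntegrable
  have h0 : (0 : ℝ) ∈ Icc 0 S := ⟨le_rfl, ha.1.trans ha.2⟩
  rw [hz b hb, hz a ha, add_sub_add_left_eq_sub,
    intervalIntegral.integral_interval_sub_left (hvi h0 hb) (hvi h0 ha)]

theorem norm_sub_le_abs_betaFun_sub {S : ℝ} {U : Set ℝ} (hU : MeasurableSet U) {z v : ℝ → E}
    (hv_int : IntegrableOn v (Icc 0 S))
    (hz : ∀ s ∈ Icc (0 : ℝ) S, z s = z 0 + ∫ σ in (0 : ℝ)..s, v σ)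
    (hv_bd : ∀ᵐ σ ∂(volume.restrict (Icc (0 : ℝ) S)), ‖v σ‖ ≤ 1)
    (hv0 : ∀ᵐ σ ∂(volume.restrict (Icc (0 : ℝ) S \ U)), v σ = 0)
    {a b : ℝ} (ha : a ∈ Icc 0 S) (hb : b ∈ Icc 0 S) :
    ‖z b - z a‖ ≤ |betaFun U b - betaFun U a| := by
  wlog hab : a ≤ b generalizing a b
  · rw [norm_sub_rev, abs_sub_comm]
    exact this hb ha (le_of_not_ge hab)
  have hsub : Ioc a b ⊆ Icc 0 S := Ioc_subset_Icc_self.trans (Icc_subset_Icc ha.1 hb.2)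
  rw [betaFun_sub_betaFun U ha.1 hab, abs_of_nonneg measureReal_nonneg,
    ← intervalIntegral_eq_sub_of_eq_add_integral hv_int hz ha hb,
    intervalIntegral.integral_of_le hab]
  simpa using norm_setIntegral_le_mul_measureReal_inter measurableSet_Ioc hU
    (measure_inter_lt_top_of_left_ne_top measure_Ioc_lt_top.ne)
    (ae_restrict_of_ae_restrict_of_subset hsub hv_bd)
    (ae_restrict_of_ae_restrict_of_subset (sdiff_subset_sdiff_left hsub) hv0)

end

theorem reparametrized_phase_field_lipschitz_general
    (S : ℝ) (hS : 0 < S) (U : Set ℝ) (hU : MeasurableSet U)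
    {E : Type*} [NormedAddCommGroup E] [NormedSpace ℝ E]
    (z v : ℝ → E)
    (hv_int : IntegrableOn v (Set.Icc 0 S))
    (hz : ∀ s ∈ Set.Icc (0:ℝ) S, z s = z 0 + ∫ σ in (0:ℝ)..s, v σ)
    (hv_bd : ∀ᵐ σ ∂(volume.restrict (Set.Icc (0:ℝ) S)), ‖v σ‖ ≤ 1)
    (hv0 : ∀ᵐ σ ∂(volume.restrict (Set.Icc (0:ℝ) S \ U)), v σ = 0)
    (ρ r : ℝ) (hρ : ρ ∈ Set.Icc 0 (betaFun U S)) (hr : r ∈ Set.Icc 0 (betaFun U S))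
    (hρr : ρ ≤ r) :
    ‖z (alphaFun U S r) - z (alphaFun U S ρ)‖ ≤ r - ρ := by
  obtain ⟨hαρ, hβαρ⟩ := alphaFun_spec hS.le hρ
  obtain ⟨hαr, hβαr⟩ := alphaFun_spec hS.le hr
  calc ‖z (alphaFun U S r) - z (alphaFun U S ρ)‖
      ≤ |betaFun U (alphaFun U S r) - betaFun U (alphaFun U S ρ)| :=
        norm_sub_le_abs_betaFun_sub hU hv_int hz hv_bd hv0 hαρ hαr
    _ = r - ρ := by rw [hβαρ, hβαr, abs_of_nonneg (sub_nonneg.2 hρr)]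

/-- Lemma 5.9: if `z(s) = z(0) + ∫₀^s v(σ) dσ` with `‖v‖ ≤ 1` a.e. on `[0,S]`
and `v = 0` a.e. outside `U`, then the reparametrized function `z̃ = z ∘ α` is
`1`-Lipschitz on `[0,R]`, `R = β(S)`. -/
theorem reparametrized_phase_field_lipschitz
    (S : ℝ) (hS : 0 < S) (U : Set ℝ) (hU : MeasurableSet U)
    (hUsub : U ⊆ Set.Ioc 0 S)
    {E : Type*} [NormedAddCommGroup E] [NormedSpace ℝ E] [CompleteSpace E]
    (z v : ℝ → E)
    (hv_int : IntegrableOn v (Set.Icc 0 S))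
    (hz : ∀ s ∈ Set.Icc (0:ℝ) S, z s = z 0 + ∫ σ in (0:ℝ)..s, v σ)
    (hv_bd : ∀ᵐ σ ∂(volume.restrict (Set.Icc (0:ℝ) S)), ‖v σ‖ ≤ 1)
    (hv0 : ∀ᵐ σ ∂(volume.restrict (Set.Icc (0:ℝ) S \ U)), v σ = 0)
    (ρ r : ℝ) (hρ : ρ ∈ Set.Icc 0 (betaFun U S)) (hr : r ∈ Set.Icc 0 (betaFun U S))
    (hρr : ρ ≤ r) :
    ‖z (alphaFun U S r) - z (alphaFun U S ρ)‖ ≤ r - ρ :=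
  reparametrized_phase_field_lipschitz_general S hS U hU z v hv_int hz hv_bd hv0 ρ r hρ hr hρr
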